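/- Let Γ be a countably infinite group and let F ⊂ Γ be a nonempty finite symmetric set with 1 ∉ F. If ℓ ≥ |F| + 1, then there exists a continuous Γ-equivariant map π : Free(3^Γ) → Col(F, ℓ) such that Stab(π) = {1}. -/

import Mathlib

open scoped Pointwise
section ShiftDefs

variable {Γ : Type} [Group Γ] {A B : Type*}

/-- The Bernoulli shift action of `Γ`: `(γ · x)(δ) = x(δγ)`. -/
def shiftAct (γ : Γ) (x : Γ → A) : Γ → A := fun δ => x (δ * γ)

/-- The free part of the shift `Γ ↷ (Γ → A)`. -/
def freePart (Γ : Type) [Group Γ] (A : Type*) : Set (Γ → A) :=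
  {x | ∀ γ : Γ, shiftAct γ x = x → γ = 1}

/-- A subshift: a closed shift-invariant subset. -/
def IsSubshift [TopologicalSpace A] (S : Set (Γ → A)) : Prop :=
  IsClosed S ∧ ∀ γ : Γ, ∀ x ∈ S, shiftAct γ x ∈ S

/-- A subshift of finite type: `⋂ γ (γ · C)` for some clopen `C`. -/
def IsSFT [TopologicalSpace A] (S : Set (Γ → A)) : Prop :=
  ∃ C : Set (Γ → A), IsClopen C ∧ S = ⋂ γ : Γ, shiftAct γ ⁻¹' C

/-- The stabilizer of a point under the shift action. -/
def ptStab (x : Γ → A) : Set Γ := {γ | shiftAct γ x = x}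

/-- `Stab(π)`: elements fixing every point in the image of `π` (domain `dom`). -/
def mapStab (π : (Γ → A) → (Γ → B)) (dom : Set (Γ → A)) : Set Γ :=
  {γ | ∀ x ∈ dom, shiftAct γ (π x) = π x}

/-- `Γ`-equivariance of `π` on the set `dom`. -/
def EquivariantOn (π : (Γ → A) → (Γ → B)) (dom : Set (Γ → A)) : Prop :=
  ∀ x ∈ dom, ∀ γ : Γ, π (shiftAct γ x) = shiftAct γ (π x)

/-- `Col(F, ℓ)`: proper `ℓ`-colorings of the Cayley graph `G(Γ, F)`. -/
def properCol (F : Finset Γ) (ℓ : ℕ) : Set (Γ → Fin ℓ) :=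
  {x | ∀ γ : Γ, ∀ σ ∈ F, x γ ≠ x (σ * γ)}

end ShiftDefs

/-!
A free configuration `x` is coloured greedily along a well-founded priority: first its symbol at
`1`, then a code of `x` on an initial segment of an enumeration of `Γ` long enough to tell `x` apart
from every `σ · x`, `σ ∈ F`. The point `x` receives its preferred colour unless one of its at most
`|F|` neighbours of lower priority already uses it, so `|F| + 1` colours suffice, and everything
depends on finitely many coordinates, which gives continuity.

The preferred colour is the sum of the symbols of `x` over a window `T` modulo `ℓ`. If
`γ ∉ F ∪ {1}` fixed every colouring, take `x` with value `0` at `1` and `γ`, a single `2` at `u`,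
and `1` elsewhere: it is free, `1` and `γ` are local minima and get their preferred colours, so the
sums of `x` over `T` and over `T γ` agree modulo `ℓ` for every position `u` of the `2`. This fails
for `u` in `T Δ T γ` outside `{1, γ}`, and a generic three-point window has such a `u` for every
`γ ≠ 1`. For `γ ∈ F`, properness of the colouring already rules out `γ`.
-/

noncomputable section

open Filter Topology Finset Classical

namespace ShiftColoring

section Shift

variable {Γ : Type} [Group Γ] {A : Type*}

theorem shiftAct_shiftAct (γ δ : Γ) (x : Γ → A) :
    shiftAct γ (shiftAct δ x) = shiftAct (γ * δ) x := by
  funext v; simp [shiftAct, mul_assoc]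

theorem shiftAct_one (x : Γ → A) : shiftAct (1 : Γ) x = x := by
  funext v; simp [shiftAct]

theorem shiftAct_inv_shiftAct (γ : Γ) (x : Γ → A) : shiftAct γ⁻¹ (shiftAct γ x) = x := by
  rw [shiftAct_shiftAct, inv_mul_cancel, shiftAct_one]

theorem shiftAct_mem_freePart {x : Γ → A} (hx : x ∈ freePart Γ A) (δ : Γ) :
    shiftAct δ x ∈ freePart Γ A := by
  intro γ hγ
  have : shiftAct (δ⁻¹ * γ * δ) x = x := by
    rw [← shiftAct_shiftAct, ← shiftAct_shiftAct, hγ, shiftAct_inv_shiftAct]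
  have h := hx _ this
  rwa [mul_assoc, inv_mul_eq_one, right_eq_mul] at h

theorem mem_freePart_of_unique {x : Γ → A} {a : Γ} (ha : ∀ b, x b = x a → b = a) :
    x ∈ freePart Γ A := by
  intro γ hγ
  have : x (a * γ⁻¹) = x a := by simpa [shiftAct] using (congrFun hγ (a * γ⁻¹)).symm
  simpa using ha _ this

theorem exists_shiftAct_apply_ne {x : Γ → A} (hx : x ∈ freePart Γ A) {σ : Γ} (hσ : σ ≠ 1) :
    ∃ δ, x (δ * σ) ≠ x δ := by
  by_contra! h
  exact hσ (hx σ (funext h))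

variable [TopologicalSpace A]

theorem continuous_shiftAct (γ : Γ) : Continuous (shiftAct γ : (Γ → A) → Γ → A) :=
  continuous_pi fun δ => continuous_apply (δ * γ)

omit [Group Γ] in
theorem eventually_apply_eq [DiscreteTopology A] (x : Γ → A) (a : Γ) :
    ∀ᶠ y in 𝓝 x, y a = x a :=
  tendsto_pure.1 (by simpa [nhds_discrete] using (continuous_apply a).tendsto x)

end Shift

section Priority

variable {Γ : Type} [Group Γ] [Countable Γ] {A : Type*}

variable (Γ) in
def enum : ℕ → Γ := (exists_surjective_nat Γ).choose

theorem enum_surjective : Function.Surjective (enum Γ) := (exists_surjective_nat Γ).choose_spec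

variable (F : Finset Γ)

def IsSeparatingLength (x : Γ → A) (n : ℕ) : Prop :=
  ∀ σ ∈ F, ∃ k < n, x (enum Γ k * σ) ≠ x (enum Γ k)

def sepLength (x : Γ → A) : ℕ :=
  if h : ∃ n, IsSeparatingLength F x n then Nat.find h else 0

def code [Encodable A] (x : Γ → A) : ℕ :=
  Encodable.encode ((List.range (sepLength F x)).map fun k => x (enum Γ k))

def prio [Encodable A] (x : Γ → A) : A ×ₗ ℕ := toLex (x 1, code F x)

variable {F}

theorem exists_isSeparatingLength {x : Γ → A} (hx : x ∈ freePart Γ A) (hF1 : (1 : Γ) ∉ F) :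
    ∃ n, IsSeparatingLength F x n := by
  have hwit : ∀ σ ∈ F, ∃ k, x (enum Γ k * σ) ≠ x (enum Γ k) := fun σ hσ => by
    obtain ⟨δ, hδ⟩ := exists_shiftAct_apply_ne hx (ne_of_mem_of_not_mem hσ hF1)
    obtain ⟨k, rfl⟩ := enum_surjective δ
    exact ⟨k, hδ⟩
  choose! k hk using hwit
  exact ⟨F.sup (k · + 1), fun σ hσ =>
    ⟨k σ, Nat.lt_of_succ_le (Finset.le_sup (f := (k · + 1)) hσ), hk σ hσ⟩⟩

theorem isSeparatingLength_sepLength {x : Γ → A} (hx : x ∈ freePart Γ A) (hF1 : (1 : Γ) ∉ F) :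
    IsSeparatingLength F x (sepLength F x) := by
  have h := exists_isSeparatingLength hx hF1
  rw [sepLength, dif_pos h]
  exact Nat.find_spec h

theorem isSeparatingLength_congr {x y : Γ → A} {n : ℕ}
    (h : ∀ k < n, y (enum Γ k) = x (enum Γ k) ∧ ∀ σ ∈ F, y (enum Γ k * σ) = x (enum Γ k * σ)) :
    IsSeparatingLength F y n ↔ IsSeparatingLength F x n := by
  refine forall₂_congr fun σ hσ => exists_congr fun k => and_congr_right fun hk => ?_
  rw [(h k hk).1, (h k hk).2 σ hσ]

theorem code_shiftAct_ne [Encodable A] {x : Γ → A} (hx : x ∈ freePart Γ A) (hF1 : (1 : Γ) ∉ F)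
    {σ : Γ} (hσ : σ ∈ F) : code F (shiftAct σ x) ≠ code F x := by
  intro h
  have hl := Encodable.encode_injective h
  have hlen : sepLength F (shiftAct σ x) = sepLength F x := by
    simpa using congrArg List.length hl
  obtain ⟨k, hk, hne⟩ := isSeparatingLength_sepLength hx hF1 σ hσ
  have hk' : k < sepLength F (shiftAct σ x) := hlen ▸ hk
  apply hne
  simpa [List.getElem?_range, hk, hk', shiftAct] using congrArg (·[k]?) hl

theorem prio_shiftAct_ne [Encodable A] {x : Γ → A} (hx : x ∈ freePart Γ A) (hF1 : (1 : Γ) ∉ F)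
    {σ : Γ} (hσ : σ ∈ F) : prio F (shiftAct σ x) ≠ prio F x := fun h =>
  code_shiftAct_ne hx hF1 hσ (congrArg Prod.snd (toLex.injective h))

theorem prio_lt_prio_shiftAct [Encodable A] [LinearOrder A] {x : Γ → A} {σ : Γ}
    (h : x 1 < x σ) : prio F x < prio F (shiftAct σ x) :=
  Prod.Lex.toLex_lt_toLex.2 (Or.inl (by simpa [shiftAct] using h))

variable [TopologicalSpace A] [DiscreteTopology A]

theorem eventually_sepLength_eq {x : Γ → A} (hx : x ∈ freePart Γ A) (hF1 : (1 : Γ) ∉ F) :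
    ∀ᶠ y in 𝓝 x, sepLength F y = sepLength F x := by
  set n := sepLength F x
  have hnear : ∀ᶠ y in 𝓝 x, ∀ k ∈ Finset.range n,
      y (enum Γ k) = x (enum Γ k) ∧ ∀ σ ∈ F, y (enum Γ k * σ) = x (enum Γ k * σ) :=
    (eventually_all_finset _).2 fun k _ =>
      (eventually_apply_eq x _).and ((eventually_all_finset F).2 fun σ _ => eventually_apply_eq x _)
  filter_upwards [hnear] with y hy
  have hiff : ∀ m ≤ n, IsSeparatingLength F y m ↔ IsSeparatingLength F x m := fun m hm =>
    isSeparatingLength_congr fun k hk => hy k (Finset.mem_range.2 (lt_of_lt_of_le hk hm))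
  have hx' := exists_isSeparatingLength hx hF1
  have hyn : IsSeparatingLength F y n := (hiff n le_rfl).2 (isSeparatingLength_sepLength hx hF1)
  rw [sepLength, dif_pos ⟨n, hyn⟩, Nat.find_eq_iff]
  refine ⟨hyn, fun m hm hym => ?_⟩
  have hxm := (hiff m hm.le).1 hym
  rw [show n = Nat.find hx' from dif_pos hx'] at hm
  exact Nat.find_min hx' hm hxm

theorem eventually_code_eq [Encodable A] {x : Γ → A} (hx : x ∈ freePart Γ A)
    (hF1 : (1 : Γ) ∉ F) : ∀ᶠ y in 𝓝 x, code F y = code F x := by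
  filter_upwards [eventually_sepLength_eq hx hF1, (eventually_all_finset (Finset.range
    (sepLength F x))).2 fun k _ => eventually_apply_eq x (enum Γ k)] with y hlen hy
  rw [code, code, hlen]
  congr 1
  exact List.map_congr_left fun k hk => hy k (by simpa using hk)

theorem eventually_prio_eq [Encodable A] {x : Γ → A} (hx : x ∈ freePart Γ A)
    (hF1 : (1 : Γ) ∉ F) : ∀ᶠ y in 𝓝 x, prio F y = prio F x := by
  filter_upwards [eventually_apply_eq x 1, eventually_code_eq hx hF1] with y h1 hcode
  rw [prio, prio, h1, hcode]

end Priority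

section Greedy

def pickPreferring {α : Type*} [LinearOrder α] (c : α) (s : Finset α) : α :=
  if c ∈ s then c else if h : s.Nonempty then s.min' h else c

theorem pickPreferring_mem {α : Type*} [LinearOrder α] (c : α) {s : Finset α}
    (hs : s.Nonempty) : pickPreferring c s ∈ s := by
  unfold pickPreferring
  split_ifs with hc
  exacts [hc, s.min'_mem hs]

theorem pickPreferring_of_mem {α : Type*} [LinearOrder α] {c : α} {s : Finset α}
    (hc : c ∈ s) : pickPreferring c s = c := if_pos hc

variable {Γ : Type} [Group Γ] {A K : Type*} [LinearOrder K]
  (F : Finset Γ) (key : (Γ → A) → K) {ℓ : ℕ} (pref : (Γ → A) → Fin ℓ)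

def lowerNbrs (x : Γ → A) : Finset Γ := F.filter fun σ => key (shiftAct σ x) < key x

theorem mem_lowerNbrs {x : Γ → A} {σ : Γ} :
    σ ∈ lowerNbrs F key x ↔ σ ∈ F ∧ key (shiftAct σ x) < key x := Finset.mem_filter

variable [WellFoundedLT K]

def greedyColor : (Γ → A) → Fin ℓ :=
  (InvImage.wf key wellFounded_lt).fix fun x rec =>
    pickPreferring (pref x) (univ \ (lowerNbrs F key x).attach.image fun σ =>
      rec (shiftAct σ.1 x) ((mem_lowerNbrs F key).1 σ.2).2)

theorem greedyColor_eq (x : Γ → A) :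
    greedyColor F key pref x = pickPreferring (pref x) (univ \ (lowerNbrs F key x).image fun σ =>
      greedyColor F key pref (shiftAct σ x)) := by
  rw [greedyColor, WellFounded.fix_eq]
  congr 2
  ext c
  simp

variable {F key pref}

theorem greedyColor_eq_pref {x : Γ → A} (hx : ∀ σ ∈ F, key x ≤ key (shiftAct σ x)) :
    greedyColor F key pref x = pref x := by
  have hlow : lowerNbrs F key x = ∅ :=
    Finset.filter_false_of_mem fun σ hσ => not_lt.2 (hx σ hσ)
  rw [greedyColor_eq, hlow, Finset.image_empty, Finset.sdiff_empty]
  exact pickPreferring_of_mem (Finset.mem_univ _)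

theorem greedyColor_shiftAct_ne_of_lt (hcard : F.card < ℓ) {x : Γ → A} {σ : Γ} (hσ : σ ∈ F)
    (hlt : key (shiftAct σ x) < key x) :
    greedyColor F key pref (shiftAct σ x) ≠ greedyColor F key pref x := by
  set used := (lowerNbrs F key x).image fun τ => greedyColor F key pref (shiftAct τ x)
  have hfree : (univ \ used).Nonempty := by
    rw [← Finset.card_pos, Finset.card_sdiff_of_subset (Finset.subset_univ _), Finset.card_univ,
      Fintype.card_fin]
    have : used.card ≤ F.card := Finset.card_image_le.trans (Finset.card_filter_le _ _)
    omega
  have hmem : greedyColor F key pref x ∈ univ \ used := by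
    rw [greedyColor_eq]
    exact pickPreferring_mem _ hfree
  intro h
  exact (Finset.mem_sdiff.1 hmem).2
    (h ▸ Finset.mem_image_of_mem _ ((mem_lowerNbrs F key).2 ⟨hσ, hlt⟩))

theorem greedyColor_shiftAct_ne (hFsym : ∀ σ ∈ F, σ⁻¹ ∈ F) (hcard : F.card < ℓ) {x : Γ → A}
    {σ : Γ} (hσ : σ ∈ F) (hne : key (shiftAct σ x) ≠ key x) :
    greedyColor F key pref (shiftAct σ x) ≠ greedyColor F key pref x := by
  rcases hne.lt_or_gt with hlt | hgt
  · exact greedyColor_shiftAct_ne_of_lt hcard hσ hlt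
  · have := greedyColor_shiftAct_ne_of_lt (pref := pref) hcard (x := shiftAct σ x) (hFsym σ hσ)
      (by rwa [shiftAct_inv_shiftAct])
    rw [shiftAct_inv_shiftAct] at this
    exact this.symm

theorem eventually_greedyColor_eq [TopologicalSpace A] {S : Set (Γ → A)}
    (hS : ∀ x ∈ S, ∀ σ ∈ F, shiftAct σ x ∈ S) (hkey : ∀ x ∈ S, ∀ᶠ y in 𝓝 x, key y = key x)
    (hpref : ∀ x ∈ S, ∀ᶠ y in 𝓝 x, pref y = pref x) {x : Γ → A} (hx : x ∈ S) :
    ∀ᶠ y in 𝓝 x, greedyColor F key pref y = greedyColor F key pref x := by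
  induction x using (InvImage.wf key wellFounded_lt).induction with
  | _ x ih =>
  have hkey_nbr : ∀ σ ∈ F, ∀ᶠ y in 𝓝 x, key (shiftAct σ y) = key (shiftAct σ x) := fun σ hσ =>
    ((continuous_shiftAct σ).tendsto x).eventually (hkey _ (hS x hx σ hσ))
  have hcolor_nbr : ∀ σ ∈ lowerNbrs F key x, ∀ᶠ y in 𝓝 x,
      greedyColor F key pref (shiftAct σ y) = greedyColor F key pref (shiftAct σ x) :=
    fun σ hσ => ((continuous_shiftAct σ).tendsto x).eventually
      (ih _ ((mem_lowerNbrs F key).1 hσ).2 (hS x hx σ ((mem_lowerNbrs F key).1 hσ).1))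
  filter_upwards [hkey x hx, hpref x hx, (eventually_all_finset F).2 hkey_nbr,
    (eventually_all_finset _).2 hcolor_nbr] with y hy_key hy_pref hy_key_nbr hy_color_nbr
  have hlow : lowerNbrs F key y = lowerNbrs F key x := by
    ext σ
    simp only [mem_lowerNbrs]
    exact and_congr_right fun hσ => by rw [hy_key_nbr σ hσ, hy_key]
  rw [greedyColor_eq, greedyColor_eq, hy_pref, hlow, Finset.image_congr hy_color_nbr]

end Greedy

section ColoringOf

variable {Γ : Type} [Group Γ] {A B : Type*}

def coloringOf (g : (Γ → A) → B) (x : Γ → A) : Γ → B := fun δ => g (shiftAct δ x)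

theorem equivariantOn_coloringOf (g : (Γ → A) → B) (S : Set (Γ → A)) :
    EquivariantOn (coloringOf g) S := fun x _ γ => by
  funext δ
  simp [coloringOf, shiftAct, shiftAct_shiftAct]

theorem continuousOn_coloringOf [TopologicalSpace A] [TopologicalSpace B] {g : (Γ → A) → B}
    {S : Set (Γ → A)} (hS : ∀ x ∈ S, ∀ δ, shiftAct δ x ∈ S)
    (hg : ∀ x ∈ S, ∀ᶠ y in 𝓝 x, g y = g x) : ContinuousOn (coloringOf g) S := fun x hx =>
  (continuousAt_pi.2 fun δ => tendsto_nhds_of_eventually_eq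
    (((continuous_shiftAct δ).tendsto x).eventually (hg _ (hS x hx δ)))).continuousWithinAt

theorem coloringOf_mem_properCol {ℓ : ℕ} {F : Finset Γ} {g : (Γ → A) → Fin ℓ} {x : Γ → A}
    (hx : ∀ δ, ∀ σ ∈ F, g (shiftAct σ (shiftAct δ x)) ≠ g (shiftAct δ x)) :
    coloringOf g x ∈ properCol F ℓ := fun δ σ hσ => by
  simpa [coloringOf, shiftAct_shiftAct] using (hx δ σ hσ).symm

theorem mapStab_coloringOf {g : (Γ → A) → B} {S : Set (Γ → A)}
    (h : ∀ γ ≠ 1, ∃ x ∈ S, g (shiftAct γ x) ≠ g x) : mapStab (coloringOf g) S = {1} := by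
  refine Set.eq_singleton_iff_unique_mem.2 ⟨fun x _ => shiftAct_one _, fun γ hγ => ?_⟩
  by_contra hγ1
  obtain ⟨x, hx, hne⟩ := h γ hγ1
  exact hne (by simpa [coloringOf, shiftAct, shiftAct_one] using congrFun (hγ x hx) 1)

end ColoringOf

section Window

def windowSum {Γ : Type} (T : Finset Γ) (x : Γ → Fin 3) : ℕ := ∑ t ∈ T, (x t : ℕ)

theorem eventually_windowSum_eq {Γ : Type} (T : Finset Γ) (x : Γ → Fin 3) :
    ∀ᶠ y in 𝓝 x, windowSum T y = windowSum T x := by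
  filter_upwards [(eventually_all_finset T).2 fun t _ => eventually_apply_eq x t] with y hy
  exact Finset.sum_congr rfl fun t ht => by rw [hy t ht]

variable {Γ : Type} [Group Γ]

/-- `T` and its right translate `T γ` differ outside `{1, γ}`. -/
def WindowSeparates (T : Finset Γ) (γ : Γ) : Prop :=
  ∃ w, w ≠ 1 ∧ w ≠ γ ∧ ¬(w ∈ T ↔ w * γ⁻¹ ∈ T)

/-- The excluded values of `c` are the relations forced on `a, b, c` when `T Δ T γ ⊆ {1, γ}`. -/
theorem windowSeparates_triple {a b c γ : Γ} (ha : a ≠ 1) (hb : b ∉ ({1, a} : Finset Γ))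
    (hc : c ∉ ({1, a, b, a⁻¹, a⁻¹ * b, a * b⁻¹, b * a⁻¹, a * b⁻¹ * a, b * a⁻¹ * b} : Finset Γ))
    (hγ : γ ≠ 1) : WindowSeparates {a, b, c} γ := by
  unfold WindowSeparates
  simp only [Finset.mem_insert, Finset.mem_singleton, not_or] at hb hc
  obtain ⟨hb1, hba⟩ := hb
  obtain ⟨hc1, hca, hcb, hc₁, hc₂, hc₃, hc₄, hc₅, hc₆⟩ := hc
  set T : Finset Γ := {a, b, c}
  by_contra! hbad
  have h1T : (1 : Γ) ∉ T := by simp [T, ha.symm, Ne.symm hb1, Ne.symm hc1]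
  have fwd : ∀ s ∈ T, s ≠ γ → s * γ⁻¹ ∈ T := fun s hs hsγ =>
    (hbad s (ne_of_mem_of_not_mem hs h1T) hsγ).1 hs
  have bwd : ∀ s ∈ T, s ≠ γ⁻¹ → s * γ ∈ T := fun s hs hsγ => by
    refine (hbad (s * γ) (fun h => hsγ (eq_inv_of_mul_eq_one_left h)) (fun h => ?_)).2
      (by simpa using hs)
    exact ne_of_mem_of_not_mem hs h1T (mul_eq_right.1 h)
  have hγc : γ = c ∨ γ = a⁻¹ * c ∨ γ = b⁻¹ * c := by
    by_cases hcγ : c = γ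
    · exact Or.inl hcγ.symm
    have := fwd c (by simp [T]) hcγ
    simp only [T, Finset.mem_insert, Finset.mem_singleton, mul_inv_eq_iff_eq_mul] at this
    rcases this with h | h | h
    · exact Or.inr (Or.inl (eq_inv_mul_of_mul_eq h.symm))
    · exact Or.inr (Or.inr (eq_inv_mul_of_mul_eq h.symm))
    · exact absurd (left_eq_mul.1 h) hγ
  rcases hγc with rfl | rfl | rfl
  · by_cases hac : a = γ⁻¹
    · exact hc₁ (by rw [hac, inv_inv])
    have := bwd a (by simp [T]) hac
    simp only [T, Finset.mem_insert, Finset.mem_singleton] at this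
    rcases this with h | h | h
    · exact hc1 (mul_eq_left.1 h)
    · exact hc₂ (eq_inv_mul_of_mul_eq h)
    · exact ha (mul_eq_right.1 h)
  · by_cases hbc : b = (a⁻¹ * c)⁻¹
    · exact hc₃ (by rw [hbc]; group)
    have := bwd b (by simp [T]) hbc
    simp only [T, Finset.mem_insert, Finset.mem_singleton] at this
    rcases this with h | h | h
    · exact hc₅ (calc c = a * b⁻¹ * (b * (a⁻¹ * c)) := by group
        _ = a * b⁻¹ * a := by rw [h])
    · exact hca (inv_mul_eq_one.1 (mul_eq_left.1 h)).symm
    · exact hba (mul_inv_eq_one.1 (mul_eq_right.1 ((mul_assoc _ _ _).trans h)))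
  · by_cases hac : a = (b⁻¹ * c)⁻¹
    · exact hc₄ (by rw [hac]; group)
    have := bwd a (by simp [T]) hac
    simp only [T, Finset.mem_insert, Finset.mem_singleton] at this
    rcases this with h | h | h
    · exact hcb (inv_mul_eq_one.1 (mul_eq_left.1 h)).symm
    · exact hc₆ (calc c = b * a⁻¹ * (a * (b⁻¹ * c)) := by group
        _ = b * a⁻¹ * b := by rw [h])
    · exact hba (mul_inv_eq_one.1 (mul_eq_right.1 ((mul_assoc _ _ _).trans h))).symm

theorem exists_windowSeparates [Infinite Γ] : ∃ T : Finset Γ, ∀ γ ≠ 1, WindowSeparates T γ := by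
  obtain ⟨a, ha⟩ := Infinite.exists_notMem_finset ({1} : Finset Γ)
  obtain ⟨b, hb⟩ := Infinite.exists_notMem_finset ({1, a} : Finset Γ)
  obtain ⟨c, hc⟩ := Infinite.exists_notMem_finset
    ({1, a, b, a⁻¹, a⁻¹ * b, a * b⁻¹, b * a⁻¹, a * b⁻¹ * a, b * a⁻¹ * b} : Finset Γ)
  exact ⟨{a, b, c}, fun γ hγ => windowSeparates_triple (by simpa using ha) hb hc hγ⟩

def spike (γ u : Γ) : Γ → Fin 3 := fun v => if v = u then 2 else if v = 1 ∨ v = γ then 0 else 1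

theorem spike_mem_freePart (γ u : Γ) : spike γ u ∈ freePart Γ (Fin 3) :=
  mem_freePart_of_unique (a := u) fun v hv => by
    by_contra hvu
    simp only [spike, if_neg hvu] at hv
    split_ifs at hv <;> simp at hv

theorem spike_apply_of_eq_one_or {γ u v : Γ} (hu : u ≠ 1 ∧ u ≠ γ) (hv : v = 1 ∨ v = γ) :
    spike γ u v = 0 := by
  have hvu : v ≠ u := by rintro rfl; tauto
  simp [spike, hvu, hv]

theorem spike_apply_pos {γ u v : Γ} (hv : v ≠ 1 ∧ v ≠ γ) : 0 < spike γ u v := by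
  unfold spike
  split_ifs with h1 h2 <;> first | decide | tauto

theorem spike_apply_val {γ u : Γ} (hu : u ≠ 1 ∧ u ≠ γ) (v : Γ) :
    (spike γ u v : ℕ) = (if v = 1 ∨ v = γ then 0 else 1) + if v = u then 1 else 0 := by
  unfold spike
  split_ifs <;> simp_all

theorem windowSum_shiftAct_spike (T : Finset Γ) {γ u : Γ} (hu : u ≠ 1 ∧ u ≠ γ) (δ : Γ) :
    windowSum T (shiftAct δ (spike γ u)) =
      (∑ t ∈ T, if t * δ = 1 ∨ t * δ = γ then 0 else 1) + if u * δ⁻¹ ∈ T then 1 else 0 := by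
  simp only [windowSum, shiftAct, spike_apply_val hu, Finset.sum_add_distrib,
    ← eq_mul_inv_iff_mul_eq, Finset.sum_ite_eq']

end Window

section WindowColor

variable {Γ : Type} [Group Γ] [Countable Γ] {F : Finset Γ} {ℓ : ℕ} [NeZero ℓ]

def windowColor (F T : Finset Γ) (ℓ : ℕ) [NeZero ℓ] : (Γ → Fin 3) → Fin ℓ :=
  greedyColor F (prio F) fun x => Fin.ofNat ℓ (windowSum T x)

theorem windowColor_shiftAct_ne (hF1 : (1 : Γ) ∉ F) (hFsym : ∀ σ ∈ F, σ⁻¹ ∈ F)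
    (hcard : F.card < ℓ) (T : Finset Γ) {x : Γ → Fin 3} (hx : x ∈ freePart Γ (Fin 3)) {σ : Γ}
    (hσ : σ ∈ F) : windowColor F T ℓ (shiftAct σ x) ≠ windowColor F T ℓ x :=
  greedyColor_shiftAct_ne hFsym hcard hσ (prio_shiftAct_ne hx hF1 hσ)

theorem eventually_windowColor_eq (hF1 : (1 : Γ) ∉ F) (T : Finset Γ) {x : Γ → Fin 3}
    (hx : x ∈ freePart Γ (Fin 3)) : ∀ᶠ y in 𝓝 x, windowColor F T ℓ y = windowColor F T ℓ x :=
  eventually_greedyColor_eq (fun y hy σ _ => shiftAct_mem_freePart hy σ)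
    (fun y hy => eventually_prio_eq hy hF1)
    (fun y _ => (eventually_windowSum_eq T y).mono fun z hz => by rw [hz]) hx

/-- `1` and `γ` are local minima of the spike, so both get their preferred colour. -/
theorem windowColor_shiftAct_spike {T : Finset Γ} (hF1 : (1 : Γ) ∉ F)
    (hFsym : ∀ σ ∈ F, σ⁻¹ ∈ F) {γ u : Γ} (hγF : γ ∉ F) (hu : u ≠ 1 ∧ u ≠ γ) {δ : Γ}
    (hδ : δ = 1 ∨ δ = γ) :
    windowColor F T ℓ (shiftAct δ (spike γ u)) =
      Fin.ofNat ℓ (windowSum T (shiftAct δ (spike γ u))) := by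
  refine greedyColor_eq_pref fun σ hσ => (prio_lt_prio_shiftAct ?_).le
  have hσ1 : σ ≠ 1 := ne_of_mem_of_not_mem hσ hF1
  simp only [shiftAct, one_mul]
  rw [spike_apply_of_eq_one_or hu hδ]
  refine spike_apply_pos ⟨?_, ?_⟩
  · rcases hδ with rfl | rfl
    · simpa using hσ1
    · exact fun h => hγF (eq_inv_of_mul_eq_one_right h ▸ hFsym σ hσ)
  · rcases hδ with rfl | rfl
    · simpa using fun h : σ = γ => hγF (h ▸ hσ)
    · simpa using hσ1

theorem exists_windowColor_shiftAct_ne [Infinite Γ] (hℓ : 2 ≤ ℓ) (hF1 : (1 : Γ) ∉ F)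
    (hFsym : ∀ σ ∈ F, σ⁻¹ ∈ F) {T : Finset Γ} {γ : Γ} (hγF : γ ∉ F) (hT : WindowSeparates T γ) :
    ∃ x ∈ freePart Γ (Fin 3), windowColor F T ℓ (shiftAct γ x) ≠ windowColor F T ℓ x := by
  by_contra! hinv
  set C₁ := ∑ t ∈ T, if t = 1 ∨ t = γ then 0 else 1
  set C₂ := ∑ t ∈ T, if t * γ = 1 ∨ t * γ = γ then 0 else 1
  have hmod : ∀ u, u ≠ 1 ∧ u ≠ γ →
      C₂ + (if u * γ⁻¹ ∈ T then 1 else 0) ≡ C₁ + (if u ∈ T then 1 else 0) [MOD ℓ] := by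
    intro u hu
    have h := hinv _ (spike_mem_freePart γ u)
    have h₁ := windowColor_shiftAct_spike (T := T) (ℓ := ℓ) hF1 hFsym hγF hu (Or.inl rfl)
    rw [shiftAct_one] at h₁
    rw [windowColor_shiftAct_spike hF1 hFsym hγF hu (Or.inr rfl), h₁] at h
    have := congrArg Fin.val h
    simp only [Fin.val_ofNat] at this
    rw [windowSum_shiftAct_spike T hu, ← shiftAct_one (spike γ u),
      windowSum_shiftAct_spike T hu, inv_one] at this
    simp only [mul_one] at this
    exact this
  obtain ⟨z, hz⟩ := Infinite.exists_notMem_finset (T ∪ T.image (· * γ) ∪ {1, γ})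
  simp only [Finset.mem_union, Finset.mem_image, Finset.mem_insert, Finset.mem_singleton,
    not_or, not_exists, not_and] at hz
  have hzT : z * γ⁻¹ ∉ T := fun h => hz.1.2 _ h (by group)
  have hC : C₂ ≡ C₁ [MOD ℓ] := by simpa [hzT, hz.1.1] using hmod z hz.2
  obtain ⟨w, hw1, hwγ, hwT⟩ := hT
  have hw := Nat.ModEq.add_left_cancel' C₁ ((hC.add_right _).symm.trans (hmod w ⟨hw1, hwγ⟩))
  have h1 : 1 % ℓ = 1 := Nat.mod_eq_of_lt hℓ
  by_cases hwT' : w ∈ T <;> simp_all [Nat.ModEq]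

end WindowColor

end ShiftColoring

end

open ShiftColoring

/-- Let `F ⊂ Γ` be a nonempty finite symmetric set with `1 ∉ F`.
If `ℓ ≥ |F| + 1`, then there is a continuous `Γ`-equivariant map
`π : Free(3^Γ) → Col(F, ℓ)` with `Stab(π) = {1}`. -/
theorem stmt6 {Γ : Type} [Group Γ] [Countable Γ] [Infinite Γ]
    (F : Finset Γ) (hFne : F.Nonempty) (hFsym : ∀ σ ∈ F, σ⁻¹ ∈ F) (hF1 : (1 : Γ) ∉ F)
    (ℓ : ℕ) (hℓ : F.card + 1 ≤ ℓ) :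
    ∃ π : (Γ → Fin 3) → (Γ → Fin ℓ),
      ContinuousOn π (freePart Γ (Fin 3)) ∧
      EquivariantOn π (freePart Γ (Fin 3)) ∧
      (∀ x ∈ freePart Γ (Fin 3), π x ∈ properCol F ℓ) ∧
      mapStab π (freePart Γ (Fin 3)) = {(1 : Γ)} := by
  have : NeZero ℓ := ⟨by omega⟩
  have hℓ2 : 2 ≤ ℓ := by have := hFne.card_pos; omega
  obtain ⟨T, hT⟩ := exists_windowSeparates (Γ := Γ)
  have hne {x : Γ → Fin 3} (hx : x ∈ freePart Γ (Fin 3)) {σ : Γ} (hσ : σ ∈ F) :=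
    windowColor_shiftAct_ne (ℓ := ℓ) hF1 hFsym hℓ T hx hσ
  refine ⟨coloringOf (windowColor F T ℓ),
    continuousOn_coloringOf (fun x hx δ => shiftAct_mem_freePart hx δ)
      (fun x hx => eventually_windowColor_eq hF1 T hx),
    equivariantOn_coloringOf _ _,
    fun x hx => coloringOf_mem_properCol fun δ σ hσ => hne (shiftAct_mem_freePart hx δ) hσ,
    mapStab_coloringOf fun γ hγ => ?_⟩
  by_cases hγF : γ ∈ F
  · exact ⟨spike γ γ, spike_mem_freePart γ γ, hne (spike_mem_freePart γ γ) hγF⟩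
  · exact exists_windowColor_shiftAct_ne hℓ2 hF1 hFsym hγF (hT γ hγ)
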